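/- For every continuous function f : [-1,1] → ℝ, lim_{α → (-1/2)⁺} ∫_{[-1,1]} f(u) dΠ_α(u) = (f(-1) + f(1))/2; that is, as α decreases to -1/2, the probability measures dΠ_α converge weakly to dΠ_{-1/2} = (δ_{-1}+δ_{1})/2. -/

import Mathlib

open MeasureTheory Real Set
open scoped ENNReal Classical

noncomputable def cab (α β : ℝ) : ℝ :=
  Real.Gamma (α + β + 2) / (2 ^ (α + β + 1) * Real.Gamma (α + 1) * Real.Gamma (β + 1))

noncomputable def F4 (a₁ a₂ b₁ b₂ x y : ℝ) : ℝ :=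
  ∑' p : ℕ × ℕ,
    (Polynomial.eval a₁ (ascPochhammer ℝ (p.1 + p.2)) *
      Polynomial.eval a₂ (ascPochhammer ℝ (p.1 + p.2))) /
    (Polynomial.eval b₁ (ascPochhammer ℝ p.1) * Polynomial.eval b₂ (ascPochhammer ℝ p.2) *
      (Nat.factorial p.1) * (Nat.factorial p.2)) * x ^ p.1 * y ^ p.2

noncomputable def Hker (α β t θ φ : ℝ) : ℝ :=
  cab α β * Real.sinh (t / 2) / Real.cosh (t / 2) ^ (α + β + 2) *
    F4 ((α + β + 2) / 2) ((α + β + 3) / 2) (α + 1) (β + 1)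
      ((Real.sin (θ / 2) * Real.sin (φ / 2) / Real.cosh (t / 2)) ^ 2)
      ((Real.cos (θ / 2) * Real.cos (φ / 2) / Real.cosh (t / 2)) ^ 2)

noncomputable def qf (θ φ u v : ℝ) : ℝ :=
  1 - u * Real.sin (θ / 2) * Real.sin (φ / 2) - v * Real.cos (θ / 2) * Real.cos (φ / 2)

noncomputable def Psi (α β t θ φ u v : ℝ) : ℝ :=
  cab α β * Real.sinh (t / 2) / (Real.cosh (t / 2) - 1 + qf θ φ u v) ^ (α + β + 2)

noncomputable def PsiE (α β t θ φ u v : ℝ) : ℝ :=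
  (Psi α β t θ φ u v + Psi α β t θ φ (-u) v + Psi α β t θ φ u (-v) +
    Psi α β t θ φ (-u) (-v)) / 4

noncomputable def PiMeas (ν : ℝ) : Measure ℝ :=
  if ν = -(1/2) then (2⁻¹ : ℝ≥0∞) • (Measure.dirac (-1) + Measure.dirac 1)
  else (volume.restrict (Icc (-1 : ℝ) 1)).withDensity
    (fun u => ENNReal.ofReal
      (Real.Gamma (ν + 1) / (Real.sqrt π * Real.Gamma (ν + 1/2)) * (1 - u ^ 2) ^ (ν - 1/2)))

noncomputable def PiFun (γ u : ℝ) : ℝ :=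
  Real.Gamma (γ + 1) / (Real.sqrt π * Real.Gamma (γ + 1/2)) *
    ∫ w in (0 : ℝ)..u, (1 - w ^ 2) ^ (γ - 1/2)

noncomputable def PiInt (ν : ℝ) (S : Set ℝ) (f : ℝ → ℝ) : ℝ :=
  if ν = -(1/2) then
    ((if (-1 : ℝ) ∈ S then f (-1) else 0) + (if (1 : ℝ) ∈ S then f 1 else 0)) / 2
  else ∫ u in S, f u *
    (Real.Gamma (ν + 1) / (Real.sqrt π * Real.Gamma (ν + 1/2)) * (1 - u ^ 2) ^ (ν - 1/2))

noncomputable def muab (α β : ℝ) : Measure ℝ :=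
  (volume.restrict (Icc (0 : ℝ) π)).withDensity
    (fun θ => ENNReal.ofReal (Real.sin (θ / 2) ^ (2 * α + 1) * Real.cos (θ / 2) ^ (2 * β + 1)))

def ballI (θ r : ℝ) : Set ℝ := Ioo (θ - r) (θ + r) ∩ Icc 0 π
/-!
For `α > -1/2` the measure `PiMeas α` has density `piDensity α u = c_α (1 - u²)^(α - 1/2)` on
`[-1, 1]`. It has total mass one (a Beta integral combined with Legendre's duplication formula)
and mean zero, so it integrates affine functions exactly; subtracting from `f` the affine function
agreeing with it at `±1` reduces the claim to functions vanishing at `±1`. On `[-1 + δ, 1 - δ]` the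
density is at most `c_α / δ`, and `c_α = Γ(α + 1) / (√π Γ(α + 1/2)) → 0` because `1/Γ` vanishes
at `0`; hence the mass escapes to the endpoints, where such a function is small.
-/

open Filter Topology

lemma continuous_inv_Gamma : Continuous fun x : ℝ => (Gamma x)⁻¹ := by
  convert Complex.continuous_re.comp
    (Complex.differentiable_one_div_Gamma.continuous.comp Complex.continuous_ofReal) using 2 with x
  rw [Function.comp_apply, Function.comp_apply, Complex.Gamma_ofReal, ← Complex.ofReal_inv,
    Complex.ofReal_re]

lemma integral_rpow_mul_one_sub_rpow {a b : ℝ} (ha : 0 < a) (hb : 0 < b) :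
    ∫ x in (0:ℝ)..1, x ^ (a - 1) * (1 - x) ^ (b - 1) = Gamma a * Gamma b / Gamma (a + b) := by
  apply Complex.ofReal_injective
  have hβ := Complex.betaIntegral_eq_Gamma_mul_div a b (by simpa) (by simpa)
  push_cast [← Complex.Gamma_ofReal, ← hβ, Complex.betaIntegral]
  rw [← intervalIntegral.integral_ofReal]
  refine intervalIntegral.integral_congr fun x hx => ?_
  rw [uIcc_of_le zero_le_one] at hx
  push_cast [Complex.ofReal_cpow hx.1, Complex.ofReal_cpow (sub_nonneg.2 hx.2)]
  rfl

lemma integral_one_sub_sq_rpow {s : ℝ} (hs : 0 < s) :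
    ∫ u in (-1:ℝ)..1, (1 - u ^ 2) ^ (s - 1) = √π * Gamma s / Gamma (s + 1 / 2) := by
  have hsub : ∫ u in (-1:ℝ)..1, (1 - u ^ 2) ^ (s - 1)
      = 2 * ∫ x in (0:ℝ)..1, (1 - (2 * x + -1) ^ 2) ^ (s - 1) := by
    rw [intervalIntegral.integral_comp_mul_add (fun u => (1 - u ^ 2) ^ (s - 1)) two_ne_zero]
    norm_num
    ring
  have hfactor : ∫ x in (0:ℝ)..1, (1 - (2 * x + -1) ^ 2) ^ (s - 1)
      = (4:ℝ) ^ (s - 1) * ∫ x in (0:ℝ)..1, x ^ (s - 1) * (1 - x) ^ (s - 1) := by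
    rw [← intervalIntegral.integral_const_mul]
    refine intervalIntegral.integral_congr fun x hx => ?_
    rw [uIcc_of_le zero_le_one] at hx
    rw [show 1 - (2 * x + -1) ^ 2 = 4 * (x * (1 - x)) by ring,
      mul_rpow zero_le_four (mul_nonneg hx.1 (sub_nonneg.2 hx.2)),
      mul_rpow hx.1 (sub_nonneg.2 hx.2)]
  have hpow : 2 * (4:ℝ) ^ (s - 1) * 2 ^ (1 - 2 * s) = 1 := by
    rw [show (4:ℝ) = 2 ^ (2:ℝ) by norm_num, ← rpow_mul zero_le_two, mul_assoc,
      ← rpow_add two_pos, show 2 * (s - 1) + (1 - 2 * s) = -1 by ring, rpow_neg_one]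
    norm_num
  have hΓ := Gamma_pos_of_pos (by linarith : 0 < 2 * s)
  rw [hsub, hfactor, integral_rpow_mul_one_sub_rpow hs hs, ← two_mul,
    eq_div_iff (Gamma_pos_of_pos (by linarith)).ne']
  calc 2 * (4 ^ (s - 1) * (Gamma s * Gamma s / Gamma (2 * s))) * Gamma (s + 1 / 2)
      = 2 * 4 ^ (s - 1) * Gamma s * (Gamma s * Gamma (s + 1 / 2)) / Gamma (2 * s) := by ring
    _ = 2 * 4 ^ (s - 1) * 2 ^ (1 - 2 * s) * √π * Gamma s *
          (Gamma (2 * s) / Gamma (2 * s)) := by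
      rw [Gamma_mul_Gamma_add_half]; ring
    _ = √π * Gamma s := by rw [hpow, div_self hΓ.ne']; ring

theorem tendsto_setIntegral_mul_of_concentrating_at_endpoints {ι : Type*} {l : Filter ι}
    {a b : ℝ} (hab : a ≤ b) {ρ : ι → ℝ → ℝ}
    (hρ_nonneg : ∀ᶠ i in l, ∀ u ∈ Icc a b, 0 ≤ ρ i u)
    (hρ_int : ∀ᶠ i in l, IntegrableOn (ρ i) (Icc a b))
    (hρ_mass : ∀ᶠ i in l, ∫ u in Icc a b, ρ i u ≤ 1)
    (hρ_conc : ∀ᶠ δ in 𝓝[>] 0, Tendsto (fun i => ∫ u in Icc (a + δ) (b - δ), ρ i u) l (𝓝 0))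
    {g : ℝ → ℝ} (hg : ContinuousOn g (Icc a b)) (hga : g a = 0) (hgb : g b = 0) :
    Tendsto (fun i => ∫ u in Icc a b, g u * ρ i u) l (𝓝 0) := by
  rw [Metric.tendsto_nhds]
  intro ε hε
  obtain ⟨M, hM⟩ := isCompact_Icc.exists_bound_of_continuousOn hg
  have hnear :
      ∀ᶠ δ in 𝓝[>] (0:ℝ), ∀ u ∈ Icc a b, u ∉ Icc (a + δ) (b - δ) → ‖g u‖ < ε / 2 := by
    obtain ⟨r₁, hr₁, h₁⟩ :=
      Metric.continuousWithinAt_iff.1 (hg a (left_mem_Icc.2 hab)) (ε / 2) (half_pos hε)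
    obtain ⟨r₂, hr₂, h₂⟩ :=
      Metric.continuousWithinAt_iff.1 (hg b (right_mem_Icc.2 hab)) (ε / 2) (half_pos hε)
    filter_upwards [Ioo_mem_nhdsGT (lt_min hr₁ hr₂)] with δ hδ u hu hmid
    have hr := lt_min_iff.1 hδ.2
    rcases not_and_or.1 hmid with hlt | hgt
    · simpa [hga] using h₁ hu (by rw [Real.dist_eq, abs_lt]; constructor <;> linarith [hu.1])
    · simpa [hgb] using h₂ hu (by rw [Real.dist_eq, abs_lt]; constructor <;> linarith [hu.2])
  obtain ⟨δ, hδ_conc, hδ_near, hδ_pos⟩ := (hρ_conc.and (hnear.and self_mem_nhdsWithin)).exists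
  have hM_small : ∀ᶠ i in l, M * ∫ u in Icc (a + δ) (b - δ), ρ i u < ε / 2 := by
    have := hδ_conc.const_mul M
    rw [mul_zero] at this
    exact this.eventually (gt_mem_nhds (half_pos hε))
  filter_upwards [hρ_nonneg, hρ_int, hρ_mass, hM_small] with i hnn hint hmass hsmall
  have hmid : Icc (a + δ) (b - δ) ⊆ Icc a b := Icc_subset_Icc (by linarith) (by linarith)
  set B := fun u => ε / 2 * ρ i u + M * (Icc (a + δ) (b - δ)).indicator (ρ i) u
  have hB_int : Integrable B (volume.restrict (Icc a b)) :=
    (hint.const_mul _).add ((hint.indicator measurableSet_Icc).const_mul M)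
  have hbound : ∀ u ∈ Icc a b, ‖g u * ρ i u‖ ≤ B u := by
    intro u hu
    simp only [B, norm_mul, Real.norm_of_nonneg (hnn u hu)]
    by_cases hu' : u ∈ Icc (a + δ) (b - δ)
    · rw [indicator_of_mem hu']
      nlinarith [hM u hu, hnn u hu]
    · rw [indicator_of_notMem hu', mul_zero, add_zero]
      exact mul_le_mul_of_nonneg_right (hδ_near u hu hu').le (hnn u hu)
  have hB : ∫ u in Icc a b, B u
      = ε / 2 * (∫ u in Icc a b, ρ i u) + M * ∫ u in Icc (a + δ) (b - δ), ρ i u := by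
    rw [integral_add (hint.const_mul _) ((hint.indicator measurableSet_Icc).const_mul M),
      integral_const_mul, integral_const_mul, setIntegral_indicator measurableSet_Icc,
      inter_eq_right.2 hmid]
  rw [dist_zero_right]
  calc ‖∫ u in Icc a b, g u * ρ i u‖
      ≤ ∫ u in Icc a b, B u :=
        norm_integral_le_of_norm_le hB_int (ae_restrict_of_forall_mem measurableSet_Icc hbound)
    _ < ε := by
      rw [hB]
      linarith [mul_le_mul_of_nonneg_left hmass (half_pos hε).le]

noncomputable def piConst (α : ℝ) : ℝ := Gamma (α + 1) / (√π * Gamma (α + 1 / 2))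

noncomputable def piDensity (α u : ℝ) : ℝ := piConst α * (1 - u ^ 2) ^ (α - 1 / 2)

section PiDensity

variable {α : ℝ}

lemma piConst_pos (hα : -(1 / 2) < α) : 0 < piConst α :=
  div_pos (Gamma_pos_of_pos (by linarith))
    (mul_pos (sqrt_pos.2 pi_pos) (Gamma_pos_of_pos (by linarith)))

lemma piDensity_nonneg (hα : -(1 / 2) < α) {u : ℝ} (hu : u ∈ Icc (-1) 1) :
    0 ≤ piDensity α u :=
  mul_nonneg (piConst_pos hα).le (rpow_nonneg (by nlinarith [hu.1, hu.2]) _)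

lemma intervalIntegral_piDensity (hα : -(1 / 2) < α) :
    ∫ u in (-1:ℝ)..1, piDensity α u = 1 := by
  have hΓ := Gamma_pos_of_pos (by linarith : 0 < α + 1 / 2)
  have hΓ₁ := Gamma_pos_of_pos (by linarith : 0 < α + 1)
  have hs := integral_one_sub_sq_rpow (by linarith : 0 < α + 1 / 2)
  rw [show α + 1 / 2 - 1 = α - 1 / 2 by ring, show α + 1 / 2 + 1 / 2 = α + 1 by ring] at hs
  simp only [piDensity]
  rw [intervalIntegral.integral_const_mul, hs, piConst, div_mul_div_comm,
    mul_comm (Gamma (α + 1)), div_self (by positivity)]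

-- An interval integral of a non-integrable function is `0` by convention, and this one is `1`.
lemma integrableOn_piDensity (hα : -(1 / 2) < α) : IntegrableOn (piDensity α) (Icc (-1) 1) :=
  (intervalIntegrable_iff_integrableOn_Icc_of_le (by norm_num)).1
    (intervalIntegral.intervalIntegrable_of_integral_ne_zero
      (by simp [intervalIntegral_piDensity hα]))

lemma integral_piDensity (hα : -(1 / 2) < α) : ∫ u in Icc (-1) 1, piDensity α u = 1 := by
  rw [integral_Icc_eq_integral_Ioc, ← intervalIntegral.integral_of_le (by norm_num),
    intervalIntegral_piDensity hα]

lemma integral_id_mul_piDensity : ∫ u in Icc (-1) 1, u * piDensity α u = 0 := by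
  have hodd :=
    intervalIntegral.integral_comp_neg (a := -1) (b := 1) (fun u => u * piDensity α u)
  simp only [piDensity, neg_neg, neg_sq, neg_mul, intervalIntegral.integral_neg] at hodd
  rw [integral_Icc_eq_integral_Ioc, ← intervalIntegral.integral_of_le (by norm_num)]
  simp only [piDensity]
  linarith

lemma integral_piMeas (hα : -(1 / 2) < α) (f : ℝ → ℝ) :
    ∫ u, f u ∂(PiMeas α) = ∫ u in Icc (-1) 1, f u * piDensity α u := by
  rw [PiMeas, if_neg hα.ne', integral_withDensity_eq_integral_toReal_smul (by fun_prop)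
    (ae_of_all _ fun _ => ENNReal.ofReal_lt_top)]
  refine setIntegral_congr_fun measurableSet_Icc fun u hu => ?_
  rw [smul_eq_mul, mul_comm]
  exact congrArg _ (ENNReal.toReal_ofReal (piDensity_nonneg hα hu))

lemma integral_piMeas_eq_add_integral_sub_affine (hα : -(1 / 2) < α) {f : ℝ → ℝ}
    (hf : ContinuousOn f (Icc (-1) 1)) (a b : ℝ) :
    ∫ u, f u ∂(PiMeas α) = a + ∫ u in Icc (-1) 1, (f u - (a + b * u)) * piDensity α u := by
  have hρ := integrableOn_piDensity hα
  have hfρ := hρ.continuousOn_mul hf isCompact_Icc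
  have huρ : IntegrableOn (fun u => u * piDensity α u) (Icc (-1) 1) :=
    hρ.continuousOn_mul continuous_id.continuousOn isCompact_Icc
  have haffine :
      IntegrableOn (fun u => a * piDensity α u + b * (u * piDensity α u)) (Icc (-1) 1) :=
    (hρ.const_mul a).add (huρ.const_mul b)
  simp_rw [sub_mul, add_mul, mul_assoc]
  rw [integral_sub hfρ haffine, integral_add (hρ.const_mul a) (huρ.const_mul b),
    integral_const_mul, integral_const_mul, integral_piDensity hα, integral_id_mul_piDensity,
    integral_piMeas hα]
  ring

lemma tendsto_piConst : Tendsto piConst (𝓝 (-(1 / 2))) (𝓝 0) := by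
  have hΓ : ContinuousAt Gamma (1 / 2) :=
    (differentiableAt_Gamma fun m => by linarith [(Nat.cast_nonneg m : (0:ℝ) ≤ m)]).continuousAt
  have hΓ' : ContinuousAt (fun α : ℝ => Gamma (α + 1)) (-(1 / 2)) :=
    hΓ.comp_of_eq (f := fun α => α + 1) (by fun_prop) (by norm_num)
  have hΓinv : ContinuousAt (fun α : ℝ => (Gamma (α + 1 / 2))⁻¹) (-(1 / 2)) :=
    (continuous_inv_Gamma.comp (continuous_add_const _)).continuousAt
  have hcont :
      ContinuousAt (fun α => Gamma (α + 1) * (Gamma (α + 1 / 2))⁻¹ / √π) (-(1 / 2)) :=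
    (hΓ'.mul hΓinv).div_const _
  convert hcont.tendsto using 2 with α
  · rw [piConst]; ring
  · norm_num [Gamma_zero]

lemma piDensity_le (hα : -(1 / 2) < α) {δ : ℝ} (hδ : 0 < δ) (hδ₁ : δ ≤ 1) {u : ℝ}
    (hu : u ∈ Icc (-1 + δ) (1 - δ)) : piDensity α u ≤ piConst α / δ := by
  have hδu : δ ≤ 1 - u ^ 2 := by nlinarith [mul_nonneg (sub_nonneg.2 hu.1) (sub_nonneg.2 hu.2)]
  have hpow : (1 - u ^ 2) ^ (α - 1 / 2) ≤ δ⁻¹ :=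
    calc (1 - u ^ 2) ^ (α - 1 / 2) ≤ (1 - u ^ 2) ^ (-1 : ℝ) :=
          rpow_le_rpow_of_exponent_ge (by linarith) (by nlinarith) (by linarith)
      _ ≤ δ⁻¹ := by rw [rpow_neg_one]; exact inv_anti₀ hδ hδu
  rw [div_eq_mul_inv]
  exact mul_le_mul_of_nonneg_left hpow (piConst_pos hα).le

lemma tendsto_setIntegral_piDensity {δ : ℝ} (hδ : 0 < δ) (hδ₁ : δ ≤ 1) :
    Tendsto (fun α => ∫ u in Icc (-1 + δ) (1 - δ), piDensity α u) (𝓝[>] (-(1 / 2)))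
      (𝓝 0) := by
  have hsub : Icc (-1 + δ) (1 - δ) ⊆ Icc (-1) 1 := Icc_subset_Icc (by linarith) (by linarith)
  have hbound : Tendsto (fun α => 2 * piConst α / δ) (𝓝[>] (-(1 / 2))) (𝓝 0) := by
    simpa using ((tendsto_piConst.const_mul 2).div_const δ).mono_left nhdsWithin_le_nhds
  refine tendsto_of_tendsto_of_tendsto_of_le_of_le' tendsto_const_nhds hbound ?_ ?_
  all_goals filter_upwards [self_mem_nhdsWithin] with α (hα : -(1 / 2) < α)
  · exact setIntegral_nonneg measurableSet_Icc fun u hu => piDensity_nonneg hα (hsub hu)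
  · calc ∫ u in Icc (-1 + δ) (1 - δ), piDensity α u
        ≤ ∫ u in Icc (-1 + δ) (1 - δ), piConst α / δ :=
          setIntegral_mono_on ((integrableOn_piDensity hα).mono_set hsub)
            (integrableOn_const measure_Icc_lt_top.ne) measurableSet_Icc
            fun u hu => piDensity_le hα hδ hδ₁ hu
      _ ≤ 2 * piConst α / δ := by
          rw [setIntegral_const, Real.volume_real_Icc_of_le (by linarith), smul_eq_mul,
            mul_div_assoc]
          exact mul_le_mul_of_nonneg_right (by linarith) (div_nonneg (piConst_pos hα).le hδ.le)

end PiDensity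

theorem piMeas_weak_convergence (f : ℝ → ℝ) (hf : ContinuousOn f (Icc (-1 : ℝ) 1)) :
    Filter.Tendsto (fun α : ℝ => ∫ u, f u ∂(PiMeas α))
      (nhdsWithin (-(1/2)) (Ioi (-(1/2)))) (nhds ((f (-1) + f 1) / 2)) := by
  set a := (f (-1) + f 1) / 2
  set b := (f 1 - f (-1)) / 2
  have hlim := tendsto_setIntegral_mul_of_concentrating_at_endpoints (ρ := piDensity)
    (by norm_num)
    (eventually_nhdsWithin_of_forall fun _ hα _ hu => piDensity_nonneg hα hu)
    (eventually_nhdsWithin_of_forall fun _ hα => integrableOn_piDensity hα)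
    (eventually_nhdsWithin_of_forall fun _ hα => (integral_piDensity hα).le)
    (by filter_upwards [Ioc_mem_nhdsGT one_pos] with δ hδ
        exact tendsto_setIntegral_piDensity hδ.1 hδ.2)
    (hf.sub (by fun_prop : Continuous fun u => a + b * u).continuousOn)
    (by simp only [Pi.sub_apply, a, b]; ring) (by simp only [Pi.sub_apply, a, b]; ring)
  rw [← add_zero a]
  refine (hlim.const_add a).congr' ?_
  filter_upwards [self_mem_nhdsWithin] with α hα
  exact (integral_piMeas_eq_add_integral_sub_affine hα hf a b).symm
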